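/- Let m, n, r ≥ 1, μ > 0, β_T > 0, ρ ≥ 0, and set β₁ = β_T·√(3μr/m), β₂ = β_T·√(3μr/n). Let X, U ∈ ℝ^{m×r} and Y, V ∈ ℝ^{n×r}, and suppose: ‖U^{(i)}‖² ≤ (3/2)·(rμ/m)·β_T² for every row i; ‖V^{(j)}‖² ≤ (3/2)·(rμ/n)·β_T² for every row j; if ‖X‖_F > √(2/3)·β_T then ‖U‖_F ≤ ‖X‖_F; and if ‖Y‖_F > √(2/3)·β_T then ‖V‖_F ≤ ‖Y‖_F. Then ⟨∇_X G(X,Y), X − U⟩ + ⟨∇_Y G(X,Y), Y − V⟩ ≥ 0, where ⟨A,B⟩ = trace(AᵀB). -/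

import Mathlib

open Matrix
open scoped Classical

noncomputable section

/-- Frobenius norm of a real matrix. -/
def frob {m n : ℕ} (A : Matrix (Fin m) (Fin n) ℝ) : ℝ :=
  Real.sqrt (∑ i, ∑ j, A i j ^ 2)

/-- Euclidean norm of the `i`-th row of a matrix. -/
def rowNorm {m n : ℕ} (A : Matrix (Fin m) (Fin n) ℝ) (i : Fin m) : ℝ :=
  Real.sqrt (∑ j, A i j ^ 2)

/-- Frobenius inner product `⟨A,B⟩ = trace(AᵀB)`. -/
def finner {m n : ℕ} (A B : Matrix (Fin m) (Fin n) ℝ) : ℝ :=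
  ∑ i, ∑ j, A i j * B i j

/-- Projection onto the set of entries indexed by `Ω` (other entries are set to `0`). -/
def projOmega {m n : ℕ} (Ω : Finset (Fin m × Fin n)) (A : Matrix (Fin m) (Fin n) ℝ) :
    Matrix (Fin m) (Fin n) ℝ :=
  Matrix.of fun i j => if (i, j) ∈ Ω then A i j else 0

/-- `G₀(z) = (max{0, z-1})²`. -/
def G0 (z : ℝ) : ℝ := max 0 (z - 1) ^ 2

/-- `G₀′(z) = 2·max{0, z-1}`. -/
def G0' (z : ℝ) : ℝ := 2 * max 0 (z - 1)

/-- The matrix whose `i`-th row is the `i`-th row of `A` and whose other rows vanish. -/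
def rowMat {m n : ℕ} (A : Matrix (Fin m) (Fin n) ℝ) (i : Fin m) :
    Matrix (Fin m) (Fin n) ℝ :=
  Matrix.of fun i' j => if i' = i then A i j else 0

/-- The regularizer `G(X,Y)`. -/
def Greg {m n r : ℕ} (ρ β1 β2 βT : ℝ) (X : Matrix (Fin m) (Fin r) ℝ)
    (Y : Matrix (Fin n) (Fin r) ℝ) : ℝ :=
  ρ * ∑ i, G0 (3 * rowNorm X i ^ 2 / (2 * β1 ^ 2)) +
    ρ * ∑ j, G0 (3 * rowNorm Y j ^ 2 / (2 * β2 ^ 2)) +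
    ρ * G0 (3 * frob X ^ 2 / (2 * βT ^ 2)) +
    ρ * G0 (3 * frob Y ^ 2 / (2 * βT ^ 2))

/-- The regularized objective `F̃(X,Y)`. -/
def Ftilde {m n r : ℕ} (Ω : Finset (Fin m × Fin n)) (M : Matrix (Fin m) (Fin n) ℝ)
    (ρ β1 β2 βT : ℝ) (X : Matrix (Fin m) (Fin r) ℝ) (Y : Matrix (Fin n) (Fin r) ℝ) : ℝ :=
  (1 / 2) * frob (projOmega Ω (M - X * Yᵀ)) ^ 2 + Greg ρ β1 β2 βT X Y

/-- Gradient of the regularizer with respect to one of the factors. -/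
def gradG1 {m r : ℕ} (ρ β βT : ℝ) (X : Matrix (Fin m) (Fin r) ℝ) :
    Matrix (Fin m) (Fin r) ℝ :=
  (∑ i, (ρ * G0' (3 * rowNorm X i ^ 2 / (2 * β ^ 2)) * (3 / β ^ 2)) • rowMat X i) +
    (ρ * G0' (3 * frob X ^ 2 / (2 * βT ^ 2)) * (3 / βT ^ 2)) • X

/-- `∇_X F̃(X,Y)`. -/
def gradX {m n r : ℕ} (Ω : Finset (Fin m × Fin n)) (M : Matrix (Fin m) (Fin n) ℝ)
    (ρ β1 βT : ℝ) (X : Matrix (Fin m) (Fin r) ℝ) (Y : Matrix (Fin n) (Fin r) ℝ) :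
    Matrix (Fin m) (Fin r) ℝ :=
  projOmega Ω (X * Yᵀ - M) * Y + gradG1 ρ β1 βT X

/-- `∇_Y F̃(X,Y)`. -/
def gradY {m n r : ℕ} (Ω : Finset (Fin m × Fin n)) (M : Matrix (Fin m) (Fin n) ℝ)
    (ρ β2 βT : ℝ) (X : Matrix (Fin m) (Fin r) ℝ) (Y : Matrix (Fin n) (Fin r) ℝ) :
    Matrix (Fin n) (Fin r) ℝ :=
  (projOmega Ω (X * Yᵀ - M))ᵀ * X + gradG1 ρ β2 βT Y

/-- Membership in `K₁`. -/
def K1mem {m n r : ℕ} (β1 β2 : ℝ) (X : Matrix (Fin m) (Fin r) ℝ)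
    (Y : Matrix (Fin n) (Fin r) ℝ) : Prop :=
  (∀ i, rowNorm X i ≤ β1) ∧ ∀ j, rowNorm Y j ≤ β2

/-- Membership in `K₂`. -/
def K2mem {m n r : ℕ} (βT : ℝ) (X : Matrix (Fin m) (Fin r) ℝ)
    (Y : Matrix (Fin n) (Fin r) ℝ) : Prop :=
  frob X ≤ βT ∧ frob Y ≤ βT

/-- Membership in `K(t) = {(X,Y) : ‖M - XYᵀ‖_F ≤ t}`. -/
def Kmem {m n r : ℕ} (M : Matrix (Fin m) (Fin n) ℝ) (t : ℝ)
    (X : Matrix (Fin m) (Fin r) ℝ) (Y : Matrix (Fin n) (Fin r) ℝ) : Prop :=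
  frob (M - X * Yᵀ) ≤ t

/-!
Every summand of `⟨∇_X G, X - U⟩` has the form `c · ⟨A, A - B⟩` with `c ≥ 0`, where `A` is a row
of `X` (or `X` itself) and `B` the matching row of `U` (or `U`). The weight `c` carries a factor
`G₀′(z)`, which vanishes unless `z > 1`, i.e. unless `‖A‖² > 2β²/3`. For rows, `2β₁²/3` dominates
the bound `(3/2)(rμ/m)β_T²` on `‖U^{(i)}‖²`, and for the full matrix the hypothesis on `‖U‖_F`
applies; in both cases `‖B‖ ≤ ‖A‖`, so `⟨A, A - B⟩ ≥ ‖A‖² - ‖A‖‖B‖ ≥ 0` by Cauchy–Schwarz.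
-/

open Finset

lemma sum_mul_sub_nonneg {ι : Type*} [Fintype ι] (f g : ι → ℝ)
    (h : ∑ i, g i ^ 2 ≤ ∑ i, f i ^ 2) : 0 ≤ ∑ i, f i * (f i - g i) := by
  have hf : 0 ≤ ∑ i, f i ^ 2 := sum_nonneg fun i _ => sq_nonneg (f i)
  have hfg : ∑ i, f i * g i ≤ ∑ i, f i ^ 2 :=
    calc ∑ i, f i * g i ≤ √(∑ i, f i ^ 2) * √(∑ i, g i ^ 2) :=
          Real.sum_mul_le_sqrt_mul_sqrt _ f g
      _ ≤ √(∑ i, f i ^ 2) * √(∑ i, f i ^ 2) := by gcongr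
      _ = ∑ i, f i ^ 2 := Real.mul_self_sqrt hf
  simp only [mul_sub, sum_sub_distrib, ← sq]
  linarith

lemma rowNorm_sq {m n : ℕ} (A : Matrix (Fin m) (Fin n) ℝ) (i : Fin m) :
    rowNorm A i ^ 2 = ∑ j, A i j ^ 2 :=
  Real.sq_sqrt (sum_nonneg fun _ _ => sq_nonneg _)

lemma frob_nonneg {m n : ℕ} (A : Matrix (Fin m) (Fin n) ℝ) : 0 ≤ frob A :=
  Real.sqrt_nonneg _

lemma frob_sq {m n : ℕ} (A : Matrix (Fin m) (Fin n) ℝ) :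
    frob A ^ 2 = ∑ i, ∑ j, A i j ^ 2 :=
  Real.sq_sqrt (sum_nonneg fun _ _ => sum_nonneg fun _ _ => sq_nonneg _)

lemma sum_row_mul_sub_nonneg {m n : ℕ} {X U : Matrix (Fin m) (Fin n) ℝ} {i : Fin m}
    (h : rowNorm U i ^ 2 ≤ rowNorm X i ^ 2) : 0 ≤ ∑ j, X i j * (X - U) i j := by
  rw [rowNorm_sq, rowNorm_sq] at h
  exact sum_mul_sub_nonneg _ _ h

lemma finner_sub_nonneg {m n : ℕ} {X U : Matrix (Fin m) (Fin n) ℝ}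
    (h : frob U ^ 2 ≤ frob X ^ 2) : 0 ≤ finner X (X - U) := by
  rw [frob_sq, frob_sq, ← Fintype.sum_prod_type', ← Fintype.sum_prod_type'] at h
  have := sum_mul_sub_nonneg (fun p : Fin m × Fin n => X p.1 p.2) (fun p => U p.1 p.2) h
  rwa [Fintype.sum_prod_type] at this

lemma finner_gradG1 {m r : ℕ} (ρ β βT : ℝ) (X B : Matrix (Fin m) (Fin r) ℝ) :
    finner (gradG1 ρ β βT X) B =
      ∑ i, ρ * (3 / β ^ 2) *
          (G0' (3 * rowNorm X i ^ 2 / (2 * β ^ 2)) * ∑ j, X i j * B i j) +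
        ρ * (3 / βT ^ 2) * (G0' (3 * frob X ^ 2 / (2 * βT ^ 2)) * finner X B) := by
  simp only [gradG1, finner, rowMat, Matrix.add_apply, Matrix.sum_apply, Matrix.smul_apply,
    Matrix.of_apply, smul_eq_mul, mul_ite, mul_zero, sum_ite_eq, mem_univ, if_true,
    add_mul, sum_add_distrib, mul_sum]
  congr 1 <;> refine sum_congr rfl fun i _ => sum_congr rfl fun j _ => ?_ <;> ring

lemma G0'_mul_nonneg {z a : ℝ} (h : 1 < z → 0 ≤ a) : 0 ≤ G0' z * a := by
  rcases le_or_gt z 1 with hz | hz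
  · simp [G0', max_eq_left (sub_nonpos.mpr hz)]
  · exact mul_nonneg (by unfold G0'; positivity) (h hz)

lemma lt_of_one_lt_three_mul_div {s β : ℝ} (h : 1 < 3 * s / (2 * β ^ 2)) :
    2 * β ^ 2 / 3 < s := by
  rcases (sq_nonneg β).eq_or_lt with hβ | hβ
  · rw [← hβ] at h; norm_num at h
  · rw [one_lt_div (by positivity)] at h
    linarith

lemma finner_gradG1_sub_nonneg {m r : ℕ} {ρ : ℝ} (β βT : ℝ) (hρ : 0 ≤ ρ)
    {X U : Matrix (Fin m) (Fin r) ℝ}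
    (hrow : ∀ i, 2 * β ^ 2 / 3 < rowNorm X i ^ 2 → rowNorm U i ^ 2 ≤ rowNorm X i ^ 2)
    (hfrob : 2 * βT ^ 2 / 3 < frob X ^ 2 → frob U ^ 2 ≤ frob X ^ 2) :
    0 ≤ finner (gradG1 ρ β βT X) (X - U) := by
  rw [finner_gradG1]
  refine add_nonneg (sum_nonneg fun i _ => mul_nonneg (by positivity) ?_)
    (mul_nonneg (by positivity) ?_)
  · exact G0'_mul_nonneg fun hz =>
      sum_row_mul_sub_nonneg (hrow i (lt_of_one_lt_three_mul_div hz))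
  · exact G0'_mul_nonneg fun hz => finner_sub_nonneg (hfrob (lt_of_one_lt_three_mul_div hz))

lemma three_halves_mul_le_two_mul_sq_div_three (c βT : ℝ) :
    3 / 2 * c * βT ^ 2 ≤ 2 * (βT * √(3 * c)) ^ 2 / 3 := by
  rw [mul_pow, Real.sq_sqrt']
  rcases le_total c 0 with hc | hc
  · rw [max_eq_right (by linarith)]
    nlinarith [sq_nonneg βT]
  · rw [max_eq_left (by linarith)]
    nlinarith [sq_nonneg βT]

lemma sq_le_sq_of_gt_sqrt_two_thirds_imp_le {a b βT : ℝ} (ha : 0 ≤ a) (hb : 0 ≤ b)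
    (h : b > √(2 / 3) * βT → a ≤ b) (hgt : 2 * βT ^ 2 / 3 < b ^ 2) :
    a ^ 2 ≤ b ^ 2 := by
  refine pow_le_pow_left₀ ha (h (lt_of_pow_lt_pow_left₀ 2 hb ?_)) 2
  rw [mul_pow, Real.sq_sqrt (by norm_num)]
  linarith

theorem stmt12_general (m n r : ℕ)
    (μ βT ρ : ℝ) (hρ : 0 ≤ ρ)
    (X U : Matrix (Fin m) (Fin r) ℝ) (Y V : Matrix (Fin n) (Fin r) ℝ)
    (hU : ∀ i, rowNorm U i ^ 2 ≤ 3 / 2 * (r * μ / m) * βT ^ 2)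
    (hV : ∀ j, rowNorm V j ^ 2 ≤ 3 / 2 * (r * μ / n) * βT ^ 2)
    (hXU : frob X > Real.sqrt (2 / 3) * βT → frob U ≤ frob X)
    (hYV : frob Y > Real.sqrt (2 / 3) * βT → frob V ≤ frob Y) :
    0 ≤ finner (gradG1 ρ (βT * Real.sqrt (3 * μ * r / m)) βT X) (X - U) +
        finner (gradG1 ρ (βT * Real.sqrt (3 * μ * r / n)) βT Y) (Y - V) := by
  have hthr (k : ℕ) : 3 / 2 * (r * μ / k) * βT ^ 2 ≤ 2 * (βT * √(3 * μ * r / k)) ^ 2 / 3 := by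
    rw [show 3 * μ * r / k = 3 * (r * μ / k) by ring]
    exact three_halves_mul_le_two_mul_sq_div_three _ _
  refine add_nonneg (finner_gradG1_sub_nonneg _ _ hρ ?_ ?_)
    (finner_gradG1_sub_nonneg _ _ hρ ?_ ?_)
  · exact fun i hi => ((hU i).trans (hthr m)).trans hi.le
  · exact sq_le_sq_of_gt_sqrt_two_thirds_imp_le (frob_nonneg U) (frob_nonneg X) hXU
  · exact fun j hj => ((hV j).trans (hthr n)).trans hj.le
  · exact sq_le_sq_of_gt_sqrt_two_thirds_imp_le (frob_nonneg V) (frob_nonneg Y) hYV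

/-- **Claim: `φ_G ≥ 0`.** -/
theorem stmt12 (m n r : ℕ) (hm : 1 ≤ m) (hn : 1 ≤ n) (hr : 1 ≤ r)
    (μ βT ρ : ℝ) (hμ : 0 < μ) (hβT : 0 < βT) (hρ : 0 ≤ ρ)
    (X U : Matrix (Fin m) (Fin r) ℝ) (Y V : Matrix (Fin n) (Fin r) ℝ)
    (hU : ∀ i, rowNorm U i ^ 2 ≤ 3 / 2 * (r * μ / m) * βT ^ 2)
    (hV : ∀ j, rowNorm V j ^ 2 ≤ 3 / 2 * (r * μ / n) * βT ^ 2)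
    (hXU : frob X > Real.sqrt (2 / 3) * βT → frob U ≤ frob X)
    (hYV : frob Y > Real.sqrt (2 / 3) * βT → frob V ≤ frob Y) :
    0 ≤ finner (gradG1 ρ (βT * Real.sqrt (3 * μ * r / m)) βT X) (X - U) +
        finner (gradG1 ρ (βT * Real.sqrt (3 * μ * r / n)) βT Y) (Y - V) :=
  stmt12_general m n r μ βT ρ hρ X U Y V hU hV hXU hYV

end
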